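/- A family a_P = {a_λ : λ ∈ P} of scalars satisfies the classical Plücker relations if and only if for all partitions α and β: Σ_{i,j ≥ 1, |α^{(i)}|+|β^{(−j)}|=|α|+|β|+1} (−1)^{|α|−|α^{(i)}|+i+j} a_{α^{(i)}} · a_{β^{(−j)}} = 0. -/

import Mathlib

open scoped BigOperators
open scoped Classical

namespace Paper

/-! ### Partitions

A partition `λ = (λ_1 ≥ λ_2 ≥ ⋯ ≥ λ_n > 0)` is encoded as the weakly decreasing,
eventually-zero function `f : ℕ → ℕ` with `f k = λ_{k+1}` (0-based indexing of parts,
parts beyond the length being `0`). -/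

def IsPartition (f : ℕ → ℕ) : Prop :=
  (∀ ⦃i j : ℕ⦄, i ≤ j → f j ≤ f i) ∧ ∃ N, ∀ k, N ≤ k → f k = 0

/-- `|λ|`, the size of the partition. -/
noncomputable def psize (f : ℕ → ℕ) : ℕ := ∑ᶠ k, f k

/-- `u_i(λ) = #{k ≥ 1 : λ_k ≥ i}`, the number of parts of `λ` that are at least `i`. -/
noncomputable def numParts (f : ℕ → ℕ) (i : ℕ) : ℕ := Nat.card {k | i ≤ f k}

/-- `l(λ)`, the number of (positive) parts. -/
noncomputable def plength (f : ℕ → ℕ) : ℕ := numParts f 1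

/-- The conjugate partition: `λ'_i = #{k : λ_k ≥ i}` (0-based: `conj f i = λ'_{i+1}`). -/
noncomputable def conj (f : ℕ → ℕ) : ℕ → ℕ := fun i => numParts f (i + 1)

/-- `λ^{(i)} = (λ_1 − 1, …, λ_j − 1, i − 1, λ_{j+1}, …, λ_n)` where `j = u_i(λ)` is the
unique index with `λ_j ≥ i > λ_{j+1}` (switch the `i`-th R of the code to U). -/
noncomputable def swR (f : ℕ → ℕ) (i : ℕ) : ℕ → ℕ := fun k =>
  if k < numParts f i then f k - 1
  else if k = numParts f i then i - 1
  else f (k - 1)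

/-- `λ^{(−i)} = (λ_1 + 1, …, λ_{i−1} + 1, λ_{i+1}, λ_{i+2}, …)` (switch the `i`-th U of the
code, from the right, to R). -/
def swU (f : ℕ → ℕ) (i : ℕ) : ℕ → ℕ := fun k =>
  if k + 1 < i then f k + 1 else f (k + 1)

/-! ### Strips, the sets `𝓡_{λ,μ}` and the signed counts `R_{λ,μ}` -/

/-- `λ − ν` is a vertical strip (at most one square per row); includes `ν ⊆ λ`. -/
def VStrip (f g : ℕ → ℕ) : Prop := ∀ k, g k ≤ f k ∧ f k ≤ g k + 1

/-- `μ − ν` is a horizontal strip (at most one square per column); includes `ν ⊆ μ`. -/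
def HStrip (f g : ℕ → ℕ) : Prop := ∀ k, f (k + 1) ≤ g k ∧ g k ≤ f k

/-- `𝓡_{λ,μ}`: partitions `ν` with `λ − ν` a vertical strip and `μ − ν` a horizontal strip. -/
def RSet (l m : ℕ → ℕ) : Set (ℕ → ℕ) :=
  {nu | IsPartition nu ∧ VStrip l nu ∧ HStrip m nu}

/-- `R_{λ,μ} = Σ_{ν ∈ 𝓡_{λ,μ}} (−1)^{|λ|−|ν|}` (zero when the set is empty). -/
noncomputable def Rnum (l m : ℕ → ℕ) : ℤ :=
  ∑ᶠ nu ∈ RSet l m, (-1 : ℤ) ^ (psize l - psize nu)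

/-- The square in row `r`, column `c` (0-based) is a `λ`-ambiguous square of `μ`:
it lies in both diagrams, is rightmost in its row of `λ` and bottommost in its column of `μ`. -/
def Ambiguous (l m : ℕ → ℕ) (r c : ℕ) : Prop :=
  c + 1 = l r ∧ m (r + 1) ≤ c ∧ c + 1 ≤ m r

/-- `μ` is a `λ`-survivor: `𝓡_{λ,μ}` is nonempty and `μ` has no `λ`-ambiguous squares. -/
def Survivor (l m : ℕ → ℕ) : Prop :=
  (RSet l m).Nonempty ∧ ∀ r c, ¬ Ambiguous l m r c

noncomputable section

/-! ### The algebra of symmetric functions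

`Λ_ℚ = ℚ[p_1, p_2, …]` realized as `MvPolynomial ℕ ℚ`, the variable `X k`
representing the power sum `p_{k+1}`. -/

abbrev SymAlg : Type := MvPolynomial ℕ ℚ

/-- The power sum `p_n` (with `p_0 = 1`). -/
def pp (n : ℕ) : SymAlg := if n = 0 then 1 else MvPolynomial.X (n - 1)

/-- `p_λ` for a multiset of parts. -/
def pMul (s : Multiset ℕ) : SymAlg := (s.map pp).prod

/-- `|Aut λ| = ∏_j f_j!` for a multiset with multiplicities `f_j`. -/
def autF (s : Multiset ℕ) : ℕ := (s.dedup.map fun v => (s.count v).factorial).prod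

/-- `z_λ = ∏_j j^{f_j} f_j!`. -/
def zee (s : Multiset ℕ) : ℕ := s.prod * autF s

/-- The complete symmetric function `h_n = Σ_{λ ⊢ n} z_λ^{-1} p_λ`
(equivalently, `Σ_n h_n t^n = exp Σ_{k≥1} p_k t^k / k`). -/
def hh (n : ℕ) : SymAlg :=
  ∑ P : Nat.Partition n, ((zee P.parts : ℚ)⁻¹) • pMul P.parts

/-- The elementary symmetric function `e_n = Σ_{λ ⊢ n} (−1)^{n−l(λ)} z_λ^{-1} p_λ`
(equivalently, `Σ_n e_n t^n = exp Σ_{k≥1} (−1)^{k−1} p_k t^k / k`). -/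
def ee (n : ℕ) : SymAlg :=
  ∑ P : Nat.Partition n,
    (((-1 : ℚ) ^ (n - Multiset.card P.parts)) * (zee P.parts : ℚ)⁻¹) • pMul P.parts

/-- `perp f g = f^⊥ g`: the adjoint of multiplication by `f` with respect to the Hall
inner product, given explicitly by substituting `p_n^⊥ = n ∂/∂p_n` multiplicatively in `f`. -/
def perp (f g : SymAlg) : SymAlg :=
  ∑ m ∈ f.support, ∑ m' ∈ g.support,
    (MvPolynomial.coeff m f * MvPolynomial.coeff m' g *
      m.prod fun k a => ((k + 1 : ℚ)) ^ a * ((m' k).descFactorial a : ℚ)) •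
      (MvPolynomial.monomial (m' - m) (1 : ℚ))

/-- The weight (degree in the `x`'s) of a `p`-monomial: `p_1^{a_1} p_2^{a_2} ⋯ ↦ Σ k a_k`. -/
def wtm (m : ℕ →₀ ℕ) : ℕ := m.sum fun k a => (k + 1) * a

/-- The maximal weight of a monomial of `f`. -/
def wt (f : SymAlg) : ℕ := f.support.sup wtm

/-- The Bernstein operator `B_n = Σ_{m ≥ 0, n+m ≥ 0} (−1)^m h_{n+m} e_m^⊥`
(the sum is finite on each `f`: terms with `m > wt f` act as zero, which justifies
the truncation). -/
def BOp (n : ℤ) (f : SymAlg) : SymAlg :=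
  ∑ m ∈ Finset.range (wt f + 1),
    if 0 ≤ n + (m : ℤ) then
      ((-1 : ℚ) ^ m) • (hh (n + (m : ℤ)).toNat * perp (ee m) f)
    else 0

/-- The adjoint Bernstein operator `B_n^⊥ = Σ_{m ≥ 0, n+m ≥ 0} (−1)^m e_m h_{n+m}^⊥`. -/
def BpOp (n : ℤ) (f : SymAlg) : SymAlg :=
  ∑ m ∈ Finset.range (wt f + (-n).toNat + 1),
    if 0 ≤ n + (m : ℤ) then
      ((-1 : ℚ) ^ m) • (ee m * perp (hh (n + (m : ℤ)).toNat) f)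
    else 0

/-- The involution `ω` of `Λ_ℚ` (with `ω e_n = h_n`); on power sums,
`ω p_n = (−1)^{n−1} p_n`. -/
def omegaMap : SymAlg →ₐ[ℚ] SymAlg :=
  MvPolynomial.aeval fun k => ((-1 : ℚ) ^ k) • MvPolynomial.X k

/-- `h_k` for integer index, vanishing for `k < 0`. -/
def hz (k : ℤ) : SymAlg := if k < 0 then 0 else hh k.toNat

/-- The Schur function `s_λ`, via the Jacobi–Trudi determinant
`s_λ = det(h_{λ_i − i + j})_{1 ≤ i,j ≤ l(λ)}`. -/
def schur (f : ℕ → ℕ) : SymAlg :=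
  Matrix.det (Matrix.of fun i j : Fin (plength f) =>
    hz ((f i : ℤ) - (i : ℤ) + (j : ℤ)))

/-! ### The graded completion of `Λ_ℚ`, as multivariate formal power series in the `p`'s -/

abbrev SymSeries : Type := MvPowerSeries ℕ ℚ

def coeffS (m : ℕ →₀ ℕ) (g : SymSeries) : ℚ := MvPowerSeries.coeff m g

/-- `f^⊥` acting on a formal series, coefficientwise. -/
def perpS (f : SymAlg) (g : SymSeries) : SymSeries := fun m'' =>
  ∑ m ∈ f.support,
    MvPolynomial.coeff m f * coeffS (m'' + m) g *
      m.prod fun k a => ((k + 1 : ℚ)) ^ a * (((m'' + m) k).descFactorial a : ℚ)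

/-- `B_n = Σ_{m ≥ 0, n+m ≥ 0} (−1)^m h_{n+m} e_m^⊥` acting on the completion, defined
coefficientwise (the term `m` contributes to the coefficient of a monomial `m''` only
when `n + m ≤ wtm m''`, which justifies the truncation). -/
def BS (n : ℤ) (g : SymSeries) : SymSeries := fun m'' =>
  ∑ m ∈ Finset.range (wtm m'' + (-n).toNat + 1),
    if 0 ≤ n + (m : ℤ) then
      ((-1 : ℚ) ^ m) *
        coeffS m'' (((hh (n + (m : ℤ)).toNat : SymAlg) : SymSeries) * perpS (ee m) g)
    else 0

/-- `B_n^⊥ = Σ_{m ≥ 0, n+m ≥ 0} (−1)^m e_m h_{n+m}^⊥` acting on the completion. -/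
def BpS (n : ℤ) (g : SymSeries) : SymSeries := fun m'' =>
  ∑ m ∈ Finset.range (wtm m'' + 1),
    if 0 ≤ n + (m : ℤ) then
      ((-1 : ℚ) ^ m) *
        coeffS m'' (((ee m : SymAlg) : SymSeries) * perpS (hh (n + (m : ℤ)).toNat) g)
    else 0

/-- The formal sum `Σ_{λ ∈ 𝒫} a_λ s_λ` (each coefficient is a genuinely finite sum,
since only the finitely many partitions of `wtm m` contribute at a monomial `m`). -/
def schurSeries (a : (ℕ → ℕ) → ℚ) : SymSeries := fun m =>
  ∑ᶠ f : ℕ → ℕ, if IsPartition f then a f * MvPolynomial.coeff m (schur f) else 0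

/-! ### Two independent families of power sums `p`, `p̂`, for the KP bilinear identity.
Here `X (Sum.inl k) = p_{k+1}` and `X (Sum.inr k) = p̂_{k+1}`. -/

abbrev BiSeries : Type := MvPowerSeries (ℕ ⊕ ℕ) ℚ

def coeffB (m : (ℕ ⊕ ℕ) →₀ ℕ) (g : BiSeries) : ℚ := MvPowerSeries.coeff m g

/-- `τ(p)`: a series in the `p`'s viewed inside the two-variable-family algebra. -/
def liftL (g : SymSeries) : BiSeries := fun m =>
  if ∀ v ∈ m.support, Sum.isLeft v = true then
    coeffS (Finsupp.comapDomain Sum.inl m Sum.inl_injective.injOn) g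
  else 0

/-- `τ(p̂)`: a series in the `p̂`'s viewed inside the two-variable-family algebra. -/
def liftR (g : SymSeries) : BiSeries := fun m =>
  if ∀ v ∈ m.support, Sum.isRight v = true then
    coeffS (Finsupp.comapDomain Sum.inr m Sum.inr_injective.injOn) g
  else 0

/-- Formal partial derivative `∂/∂X_v` on the two-family power series algebra. -/
def DV (v : ℕ ⊕ ℕ) (g : BiSeries) : BiSeries := fun m =>
  ((m v : ℚ) + 1) * coeffB (m + Finsupp.single v 1) g

/-- `∂/∂p_i − ∂/∂p̂_i` (for `i ≥ 1`). -/
def dd (i : ℕ) (g : BiSeries) : BiSeries :=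
  DV (Sum.inl (i - 1)) g - DV (Sum.inr (i - 1)) g

/-- Composition of the commuting operators `∂/∂p_i − ∂/∂p̂_i` over a list of indices. -/
def dProd (s : List ℕ) : BiSeries → BiSeries := s.foldr (fun i F => dd i ∘ F) id

/-- The coefficient of `y^n` in `exp(−Σ_{k≥1} y^k (∂/∂p_k − ∂/∂p̂_k))`, namely
`Σ_{λ ⊢ n} (−1)^{l(λ)} (∏_j f_j!)^{-1} ∏_i (∂/∂p_{λ_i} − ∂/∂p̂_{λ_i})`. -/
def DD (n : ℕ) (g : BiSeries) : BiSeries :=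
  ∑ P : Nat.Partition n,
    (((-1 : ℚ) ^ (Multiset.card P.parts)) * ((autF P.parts : ℚ))⁻¹) •
      dProd (P.parts.sort (· ≤ ·)) g

/-- The coefficient of `t^n` in `exp(Σ_{k≥1} (t^k/k)(p_k − p̂_k))`, namely
`Σ_{λ ⊢ n} z_λ^{-1} ∏_i (p_{λ_i} − p̂_{λ_i})`. -/
def GG (n : ℕ) : MvPolynomial (ℕ ⊕ ℕ) ℚ :=
  ∑ P : Nat.Partition n,
    ((zee P.parts : ℚ)⁻¹) •
      (P.parts.map fun i =>
        (MvPolynomial.X (Sum.inl (i - 1)) - MvPolynomial.X (Sum.inr (i - 1)) :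
          MvPolynomial (ℕ ⊕ ℕ) ℚ)).prod

def wtB (m : (ℕ ⊕ ℕ) →₀ ℕ) : ℕ := m.sum fun v a => (Sum.elim (· + 1) (· + 1) v) * a

def wtL (m : (ℕ ⊕ ℕ) →₀ ℕ) : ℕ := m.sum fun v a => (Sum.elim (· + 1) (fun _ => 0) v) * a

def wtR (m : (ℕ ⊕ ℕ) →₀ ℕ) : ℕ := m.sum fun v a => (Sum.elim (fun _ => 0) (· + 1) v) * a

/-- The left-hand side
`[t^{-1}] exp(Σ_{k≥1} (t^k/k)(p_k − p̂_k)) exp(−Σ_{k≥1} t^{-k}(∂/∂p_k − ∂/∂p̂_k)) τ(p) τ(p̂)`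
of the KP bilinear equation, i.e. `Σ_{n≥0} G_n · D_{n+1} (τ(p)τ(p̂))`, defined
coefficientwise (only `n ≤ wtB m` contributes at a monomial `m`, since `G_n` is
homogeneous of weight `n`). -/
def KPLHS (tau : SymSeries) : BiSeries := fun m =>
  ∑ n ∈ Finset.range (wtB m + 1),
    coeffB m (((GG n : MvPolynomial (ℕ ⊕ ℕ) ℚ) : BiSeries) *
      DD (n + 1) (liftL tau * liftR tau))

/-- `τ` is a `τ`-function for the KP hierarchy: it satisfies the KP bilinear equation. -/
def IsTau (tau : SymSeries) : Prop := KPLHS tau = 0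

/-- `[t^{-1}] (B(t) τ(p)) · (B̂^⊥(t^{-1}) τ(p̂)) = Σ_{n ∈ ℤ} (B_n τ)(p) · (B̂^⊥_{n+1} τ)(p̂)`,
defined coefficientwise (at a monomial `m` only `−wtR m − 1 ≤ n ≤ wtL m` contributes,
which justifies the truncation; `n = j − wtR m − 1`). -/
def prodRHS (tau : SymSeries) : BiSeries := fun m =>
  ∑ j ∈ Finset.range (wtL m + wtR m + 2),
    coeffB m (liftL (BS ((j : ℤ) - (wtR m : ℤ) - 1) tau) *
      liftR (BpS ((j : ℤ) - (wtR m : ℤ)) tau))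

/-! ### The Plücker relations -/

/-- The condition on `ℓ` in the classical Plücker relations: `0 ≤ ℓ ≤ m − 1` and
`α_ℓ − 1 ≥ β_{k+1} − k + ℓ + 1 ≥ α_{ℓ+1}` (1-based, conventions `α_0 = ∞`, `α_m = −∞`)
and `β_{k+1} − k + ℓ + 1 ≥ 0`. -/
def PCond (m : ℕ) (α β : ℕ → ℕ) (k ℓ : ℕ) : Prop :=
  ℓ + 1 ≤ m ∧
  (ℓ = 0 ∨ ((β k : ℤ) - (k : ℤ) + ℓ + 1 ≤ (α (ℓ - 1) : ℤ) - 1)) ∧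
  (ℓ + 1 = m ∨ ((α ℓ : ℤ) ≤ (β k : ℤ) - (k : ℤ) + ℓ + 1)) ∧
  0 ≤ (β k : ℤ) - (k : ℤ) + ℓ + 1

/-- The term indexed by `k` in a classical Plücker relation:
`(−1)^{k−m+1+ℓ} a_{(α_1−1,…,α_ℓ−1, β_{k+1}−k+ℓ+1, α_{ℓ+1},…,α_{m−1})}
 · a_{(β_1+1,…,β_k+1, β_{k+2},…,β_{m+1})}`
for the unique admissible `ℓ` (identically `0` when no `ℓ` exists). -/
def cterm (a : (ℕ → ℕ) → ℚ) (m : ℕ) (α β : ℕ → ℕ) (k : ℕ) : ℚ :=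
  if h : ∃ ℓ : ℕ, PCond m α β k ℓ then
    ((-1 : ℚ) ^ ((k : ℤ) - (m : ℤ) + 1 + (h.choose : ℤ))) *
      a (fun t => if t < h.choose then α t - 1
          else if t = h.choose then ((β k : ℤ) - (k : ℤ) + h.choose + 1).toNat
          else α (t - 1)) *
      a (fun t => if t < k then β t + 1 else β (t + 1))
  else 0

/-- The classical Plücker relations for a family of scalars indexed by partitions. -/
def ClassicalPlucker (a : (ℕ → ℕ) → ℚ) : Prop :=
  ∀ m : ℕ, 1 ≤ m → ∀ α β : ℕ → ℕ, IsPartition α → IsPartition β →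
    plength α ≤ m - 1 → plength β ≤ m + 1 →
      ∑ k ∈ Finset.range (m + 1), cterm a m α β k = 0

/-- The symmetrical form of the Plücker relations:
for all partitions `α`, `β`,
`Σ_{i,j ≥ 1, |α^{(i)}|+|β^{(−j)}| = |α|+|β|+1} (−1)^{|α|−|α^{(i)}|+i+j} a_{α^{(i)}} a_{β^{(−j)}} = 0`. -/
def SymPlucker (a : (ℕ → ℕ) → ℚ) : Prop :=
  ∀ α β : ℕ → ℕ, IsPartition α → IsPartition β →
    (∑ᶠ (i : ℕ), ∑ᶠ (j : ℕ),
      if 1 ≤ i ∧ 1 ≤ j ∧ psize (swR α i) + psize (swU β j) = psize α + psize β + 1 then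
        ((-1 : ℚ) ^ ((psize α : ℤ) - (psize (swR α i) : ℤ) + (i : ℤ) + (j : ℤ))) *
          a (swR α i) * a (swU β j)
      else 0) = 0

end
end Paper

/-! Write `u_i(α)` for the number of parts of `α` that are at least `i`. For `i ≥ 1` and
`j = k + 1`, since `|α^{(i)}| = |α| + i - 1 - u_i(α)` and `|β^{(-j)}| = |β| + k - β_{k+1}`, the
size condition of the symmetric relation reads `i = β_{k+1} - k + u_i(α) + 2`. As
`i ↦ i - u_i(α)` is strictly increasing, each `j` meets at most one `i`; the admissible `ℓ` of the
`k`-th classical term is exactly `u_i(α)`, and then `α^{(i)}`, `β^{(-j)}` are the two partitions of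
that term, with signs differing by `(-1)^{m+1}`. So whenever `l(α) ≤ m - 1` and `l(β) ≤ m + 1`
(which kills all `j > m + 1`), the symmetric sum is `(-1)^{m+1}` times the classical one. -/

namespace Paper

section Partitions

variable {f : ℕ → ℕ}

theorem IsPartition.lt_numParts_iff (hf : IsPartition f) {i : ℕ} (hi : 1 ≤ i) (k : ℕ) :
    k < numParts f i ↔ i ≤ f k := by
  have hlower : IsLowerSet {k | i ≤ f k} := fun _ _ hle hk => hk.trans (hf.1 hle)
  have hfinite : {k | i ≤ f k}.Finite := by
    obtain ⟨N, hN⟩ := hf.2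
    refine (Set.finite_Iio N).subset fun x hx => ?_
    by_contra hxN
    have := hN x (not_lt.mp hxN)
    simp_all
  obtain hS | ⟨n, hS⟩ := hlower.eq_univ_or_Iio
  · exact absurd (hS ▸ hfinite) Set.infinite_univ
  · have hn : numParts f i = n := by simp [numParts, hS]
    rw [hn, ← Set.mem_Iio, ← hS]
    rfl

theorem IsPartition.numParts_le_numParts (hf : IsPartition f) {i i' : ℕ} (hi : 1 ≤ i)
    (hii' : i ≤ i') : numParts f i' ≤ numParts f i := by
  by_contra! h
  have h' := (hf.lt_numParts_iff (hi.trans hii') _).mp h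
  exact lt_irrefl _ ((hf.lt_numParts_iff hi _).mpr (hii'.trans h'))

theorem IsPartition.numParts_le_plength (hf : IsPartition f) {i : ℕ} (hi : 1 ≤ i) :
    numParts f i ≤ plength f :=
  hf.numParts_le_numParts le_rfl hi

theorem IsPartition.eq_zero_of_plength_le (hf : IsPartition f) {k : ℕ} (hk : plength f ≤ k) :
    f k = 0 := by
  by_contra h
  exact hk.not_gt ((hf.lt_numParts_iff le_rfl k).mpr (Nat.one_le_iff_ne_zero.mpr h))

theorem IsPartition.numParts_eq_iff (hf : IsPartition f) {i : ℕ} (hi : 1 ≤ i) (ℓ : ℕ) :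
    numParts f i = ℓ ↔ (ℓ = 0 ∨ i ≤ f (ℓ - 1)) ∧ f ℓ < i := by
  rw [← not_le, ← hf.lt_numParts_iff hi, ← hf.lt_numParts_iff hi]
  omega

theorem IsPartition.eq_of_add_numParts_eq (hf : IsPartition f) {i i' : ℕ} (hi : 1 ≤ i)
    (hi' : 1 ≤ i') (h : i + numParts f i' = i' + numParts f i) : i = i' := by
  rcases le_total i i' with hle | hle
  · have := hf.numParts_le_numParts hi hle
    omega
  · have := hf.numParts_le_numParts hi' hle
    omega

theorem psize_eq_sum_range {N : ℕ} (hN : ∀ k, N ≤ k → f k = 0) :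
    psize f = ∑ k ∈ Finset.range N, f k := by
  refine finsum_eq_sum_of_support_subset f fun k hk => ?_
  by_contra hkN
  exact hk (hN k (by simpa using hkN))

theorem IsPartition.psize_swR_add_numParts (hf : IsPartition f) {i : ℕ} (hi : 1 ≤ i) :
    psize (swR f i) + numParts f i = psize f + (i - 1) := by
  obtain ⟨N, hN⟩ := hf.2
  set u := numParts f i
  have hsize : psize f = ∑ k ∈ Finset.range u, f k + ∑ x ∈ Finset.range N, f (u + x) := by
    rw [psize_eq_sum_range (N := u + N) fun k hk => hN k (by omega), Finset.sum_range_add]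
  have hsize' : psize (swR f i) =
      ∑ k ∈ Finset.range u, (f k - 1) + (i - 1) + ∑ x ∈ Finset.range N, f (u + x) := by
    rw [psize_eq_sum_range (N := u + 1 + N), Finset.sum_range_add, Finset.sum_range_succ]
    · congr 1
      · congr 1
        · exact Finset.sum_congr rfl fun k hk => if_pos (Finset.mem_range.mp hk)
        · simp [swR, u]
      · refine Finset.sum_congr rfl fun x _ => ?_
        simp only [swR]
        rw [if_neg (by omega), if_neg (by omega)]
        congr 1
        omega
    · intro k hk
      simp only [swR]
      rw [if_neg (by omega), if_neg (by omega)]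
      exact hN _ (by omega)
  have hpred : ∑ k ∈ Finset.range u, (f k - 1 + 1) = ∑ k ∈ Finset.range u, f k := by
    refine Finset.sum_congr rfl fun k hk => ?_
    have := (hf.lt_numParts_iff hi k).mp (Finset.mem_range.mp hk)
    omega
  rw [Finset.sum_add_distrib, Finset.sum_const, Finset.card_range, smul_eq_mul, mul_one] at hpred
  omega

theorem IsPartition.psize_swU_succ_add (hf : IsPartition f) (d : ℕ) :
    psize (swU f (d + 1)) + f d = psize f + d := by
  obtain ⟨N, hN⟩ := hf.2
  have hsize : psize f =
      ∑ k ∈ Finset.range d, f k + f d + ∑ x ∈ Finset.range N, f (d + 1 + x) := by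
    rw [psize_eq_sum_range (N := d + 1 + N) fun k hk => hN k (by omega), Finset.sum_range_add,
      Finset.sum_range_succ]
  have hsize' : psize (swU f (d + 1)) =
      ∑ k ∈ Finset.range d, (f k + 1) + ∑ x ∈ Finset.range N, f (d + 1 + x) := by
    rw [psize_eq_sum_range (N := d + N), Finset.sum_range_add]
    · congr 1
      · exact Finset.sum_congr rfl fun k hk => if_pos (by simpa using hk)
      · refine Finset.sum_congr rfl fun x _ => ?_
        rw [swU, if_neg (by omega)]
        congr 1
        omega
    · intro k hk
      rw [swU, if_neg (by omega)]
      exact hN _ (by omega)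
  rw [Finset.sum_add_distrib, Finset.sum_const, Finset.card_range, smul_eq_mul, mul_one]
    at hsize'
  omega

end Partitions

noncomputable def symPluckerTerm (a : (ℕ → ℕ) → ℚ) (α β : ℕ → ℕ) (i j : ℕ) : ℚ :=
  if 1 ≤ i ∧ 1 ≤ j ∧ psize (swR α i) + psize (swU β j) = psize α + psize β + 1 then
    ((-1 : ℚ) ^ ((psize α : ℤ) - (psize (swR α i) : ℤ) + (i : ℤ) + (j : ℤ))) *
      a (swR α i) * a (swU β j)
  else 0

theorem symPlucker_iff (a : (ℕ → ℕ) → ℚ) :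
    SymPlucker a ↔ ∀ α β : ℕ → ℕ, IsPartition α → IsPartition β →
      ∑ᶠ (i : ℕ), ∑ᶠ (j : ℕ), symPluckerTerm a α β i j = 0 :=
  Iff.rfl

section Plucker

variable {a : (ℕ → ℕ) → ℚ} {m : ℕ} {α β : ℕ → ℕ}

theorem symPluckerTerm_zero_right (i : ℕ) : symPluckerTerm a α β i 0 = 0 :=
  if_neg (by omega)

theorem symPluckerTerm_succ (hα : IsPartition α) (hβ : IsPartition β) (i k : ℕ) :
    symPluckerTerm a α β i (k + 1) =
      if 1 ≤ i ∧ i + k = numParts α i + β k + 2 then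
        (-1 : ℚ) ^ (numParts α i + k) * a (swR α i) * a (swU β (k + 1))
      else 0 := by
  by_cases hi : 1 ≤ i
  · have hR := hα.psize_swR_add_numParts hi
    have hU := hβ.psize_swU_succ_add k
    by_cases hc : i + k = numParts α i + β k + 2
    · rw [symPluckerTerm, if_pos ⟨hi, by omega, by omega⟩, if_pos ⟨hi, hc⟩]
      have hexp : (psize α : ℤ) - psize (swR α i) + i + ((k + 1 : ℕ) : ℤ) =
          ((numParts α i + k : ℕ) : ℤ) + 2 := by
        omega
      rw [hexp, zpow_add₀ (by norm_num), zpow_natCast]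
      norm_num
    · rw [symPluckerTerm, if_neg (by omega), if_neg (by omega)]
  · rw [symPluckerTerm, if_neg (by omega), if_neg (by omega)]

theorem symPluckerTerm_succ_eq_zero (hm : 1 ≤ m) (hα : IsPartition α) (hβ : IsPartition β)
    (hlα : plength α ≤ m - 1) (hlβ : plength β ≤ m + 1) {k : ℕ} (hk : m + 1 ≤ k) (i : ℕ) :
    symPluckerTerm a α β i (k + 1) = 0 := by
  rw [symPluckerTerm_succ hα hβ, if_neg]
  rintro ⟨hi, hik⟩
  have := hα.numParts_le_plength hi
  have := hβ.eq_zero_of_plength_le (k := k) (by omega)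
  omega

theorem pCond_iff_numParts_eq (hm : 1 ≤ m) (hα : IsPartition α) (hlα : plength α ≤ m - 1)
    {k ℓ i : ℕ} (hi : 1 ≤ i) (hc : (i : ℤ) = β k - k + ℓ + 2) :
    PCond m α β k ℓ ↔ numParts α i = ℓ := by
  have hprev : ℓ - 1 < plength α ↔ 1 ≤ α (ℓ - 1) := hα.lt_numParts_iff le_rfl _
  have hlast : ℓ + 1 = m → α ℓ = 0 := fun h => hα.eq_zero_of_plength_le (by omega)
  rw [hα.numParts_eq_iff hi, PCond]
  omega

theorem exists_numParts_eq_of_pCond (hm : 1 ≤ m) (hα : IsPartition α)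
    (hlα : plength α ≤ m - 1) {k ℓ : ℕ} (h : PCond m α β k ℓ) :
    ∃ i : ℕ, 1 ≤ i ∧ (i : ℤ) = β k - k + ℓ + 2 ∧ numParts α i = ℓ := by
  have hc := h.2.2.2
  have hi : ((β k + ℓ + 2 - k : ℕ) : ℤ) = β k - k + ℓ + 2 := by omega
  exact ⟨_, by omega, hi, (pCond_iff_numParts_eq hm hα hlα (by omega) hi).mp h⟩

theorem PCond.unique (hm : 1 ≤ m) (hα : IsPartition α) (hlα : plength α ≤ m - 1)
    {k ℓ ℓ' : ℕ} (h : PCond m α β k ℓ) (h' : PCond m α β k ℓ') : ℓ = ℓ' := by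
  obtain ⟨i, hi, hci, hu⟩ := exists_numParts_eq_of_pCond hm hα hlα h
  obtain ⟨i', hi', hci', hu'⟩ := exists_numParts_eq_of_pCond hm hα hlα h'
  have := hα.eq_of_add_numParts_eq hi hi' (by omega)
  omega

theorem cterm_eq_of_pCond (hm : 1 ≤ m) (hα : IsPartition α) (hlα : plength α ≤ m - 1)
    {k ℓ : ℕ} (h : PCond m α β k ℓ) :
    cterm a m α β k = (-1 : ℚ) ^ ((k : ℤ) - m + 1 + ℓ) *
      a (fun t => if t < ℓ then α t - 1
          else if t = ℓ then ((β k : ℤ) - k + ℓ + 1).toNat else α (t - 1)) *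
      a (fun t => if t < k then β t + 1 else β (t + 1)) := by
  have hex : ∃ ℓ, PCond m α β k ℓ := ⟨ℓ, h⟩
  rw [cterm, dif_pos hex, hex.choose_spec.unique hm hα hlα h]

theorem finsum_symPluckerTerm_succ (hm : 1 ≤ m) (hα : IsPartition α) (hβ : IsPartition β)
    (hlα : plength α ≤ m - 1) (k : ℕ) :
    ∑ᶠ i, symPluckerTerm a α β i (k + 1) = (-1 : ℚ) ^ (m + 1) * cterm a m α β k := by
  by_cases hex : ∃ ℓ, PCond m α β k ℓ
  · obtain ⟨ℓ, hℓ⟩ := hex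
    obtain ⟨i, hi, hci, hu⟩ := exists_numParts_eq_of_pCond hm hα hlα hℓ
    rw [finsum_eq_single _ i, symPluckerTerm_succ hα hβ, if_pos ⟨hi, by omega⟩,
      cterm_eq_of_pCond hm hα hlα hℓ]
    · have hR : swR α i = fun t => if t < ℓ then α t - 1
          else if t = ℓ then ((β k : ℤ) - k + ℓ + 1).toNat else α (t - 1) := by
        funext t
        simp only [swR, hu]
        congr 2
        omega
      have hU : swU β (k + 1) = fun t => if t < k then β t + 1 else β (t + 1) := by
        funext t
        simp only [swU, Nat.add_lt_add_iff_right]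
      have hsign : (-1 : ℚ) ^ (ℓ + k) = (-1) ^ (m + 1) * (-1) ^ ((k : ℤ) - m + 1 + ℓ) := by
        have hexp : ((m + 1 : ℕ) : ℤ) + ((k : ℤ) - m + 1 + ℓ) = ((ℓ + k : ℕ) : ℤ) + 2 := by
          push_cast
          ring
        rw [← zpow_natCast, ← zpow_natCast, ← zpow_add₀ (by norm_num), hexp,
          zpow_add₀ (by norm_num)]
        norm_num
      rw [hu, hR, hU, hsign]
      ring
    · intro i' hi'
      rw [symPluckerTerm_succ hα hβ, if_neg]
      rintro ⟨hi'1, hik⟩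
      exact hi' (hα.eq_of_add_numParts_eq hi'1 hi (by omega))
  · rw [cterm, dif_neg hex, mul_zero]
    refine finsum_eq_zero_of_forall_eq_zero fun i => ?_
    rw [symPluckerTerm_succ hα hβ, if_neg]
    rintro ⟨hi, hik⟩
    exact hex ⟨numParts α i, (pCond_iff_numParts_eq hm hα hlα hi (by omega)).mpr rfl⟩

theorem finsum_finsum_symPluckerTerm (hm : 1 ≤ m) (hα : IsPartition α) (hβ : IsPartition β)
    (hlα : plength α ≤ m - 1) (hlβ : plength β ≤ m + 1) :
    ∑ᶠ i, ∑ᶠ j, symPluckerTerm a α β i j =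
      (-1 : ℚ) ^ (m + 1) * ∑ k ∈ Finset.range (m + 1), cterm a m α β k := by
  have hrow (i : ℕ) :
      ∑ᶠ j, symPluckerTerm a α β i j = ∑ j ∈ Finset.range (m + 2), symPluckerTerm a α β i j := by
    refine finsum_eq_sum_of_support_subset _ fun j hj => ?_
    by_contra hjm
    have hjm : m + 2 ≤ j := by simpa using hjm
    obtain ⟨k, rfl⟩ : ∃ k, j = k + 1 := ⟨j - 1, by omega⟩
    exact hj (symPluckerTerm_succ_eq_zero hm hα hβ hlα hlβ (by omega) i)
  have hcol (j : ℕ) : (Function.support fun i => symPluckerTerm a α β i j).Finite := by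
    refine Set.Subsingleton.finite fun i hi i' hi' => ?_
    cases j with
    | zero => exact absurd (symPluckerTerm_zero_right i) hi
    | succ k =>
      rw [Function.mem_support, symPluckerTerm_succ hα hβ, ne_eq, ite_eq_right_iff,
        Classical.not_imp] at hi hi'
      obtain ⟨⟨hi1, hik⟩, -⟩ := hi
      obtain ⟨⟨hi'1, hi'k⟩, -⟩ := hi'
      exact hα.eq_of_add_numParts_eq hi1 hi'1 (by omega)
  rw [finsum_congr hrow, finsum_sum_comm _ _ fun j _ => hcol j, Finset.sum_range_succ',
    finsum_congr symPluckerTerm_zero_right, finsum_zero, add_zero, Finset.mul_sum]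
  exact Finset.sum_congr rfl fun k _ => finsum_symPluckerTerm_succ hm hα hβ hlα k

end Plucker

end Paper

/-- A family `a_𝒫 = {a_λ}` of scalars satisfies the classical Plücker
relations if and only if for all partitions `α`, `β`,
`Σ_{i,j ≥ 1, |α^{(i)}|+|β^{(−j)}| = |α|+|β|+1} (−1)^{|α|−|α^{(i)}|+i+j} a_{α^{(i)}} a_{β^{(−j)}} = 0`. -/
theorem Paper.classicalPlucker_iff_symPlucker (a : (ℕ → ℕ) → ℚ) :
    Paper.ClassicalPlucker a ↔ Paper.SymPlucker a := by
  rw [Paper.symPlucker_iff]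
  constructor
  · intro h α β hα hβ
    have hm : 1 ≤ Paper.plength α + Paper.plength β + 1 := by omega
    rw [Paper.finsum_finsum_symPluckerTerm hm hα hβ (by omega) (by omega),
      h _ hm α β hα hβ (by omega) (by omega), mul_zero]
  · intro h m hm α β hα hβ hlα hlβ
    have hsum := Paper.finsum_finsum_symPluckerTerm (a := a) hm hα hβ hlα hlβ
    rw [h α β hα hβ, eq_comm, mul_eq_zero] at hsum
    exact hsum.resolve_left (pow_ne_zero _ (by norm_num))
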